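/- Let T > 0 and let m be a finite nonnegative Borel measure on [0,T]. Suppose that for every continuously differentiable function f : [0,T] → ℝ one has ∫_{[0,T]} f'(t) dm(t) = f(T) − f(0). Then m equals the restriction of the Lebesgue measure to [0,T]. -/

import Mathlib

open MeasureTheory

theorem Continuous.contDiff_one_intervalIntegral {E : Type*} [NormedAddCommGroup E]
    [NormedSpace ℝ E] [CompleteSpace E] {g : ℝ → E} (hg : Continuous g) (a : ℝ) :
    ContDiff ℝ 1 (fun t ↦ ∫ s in a..t, g s) := by
  rw [contDiff_one_iff_deriv, funext (hg.deriv_integral _ a)]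
  exact ⟨fun t ↦ (hg.integral_hasStrictDerivAt a t).hasDerivAt.differentiableAt, hg⟩

theorem integral_eq_intervalIntegral_of_forall_integral_deriv {m : Measure ℝ} {a b : ℝ}
    (h : ∀ f : ℝ → ℝ, ContDiff ℝ 1 f → ∫ t, deriv f t ∂m = f b - f a)
    {g : ℝ → ℝ} (hg : Continuous g) :
    ∫ t, g t ∂m = ∫ t in a..b, g t := by
  simpa [funext (hg.deriv_integral _ a)] using h _ (hg.contDiff_one_intervalIntegral a)

theorem stmt0_general (T : ℝ) (hT : 0 < T) (m : Measure ℝ) [IsFiniteMeasure m]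
    (h : ∀ f : ℝ → ℝ, ContDiff ℝ 1 f → ∫ t, deriv f t ∂m = f T - f 0) :
    m = volume.restrict (Set.Icc 0 T) := by
  refine ext_of_forall_integral_eq_of_IsFiniteMeasure fun f ↦ ?_
  rw [integral_eq_intervalIntegral_of_forall_integral_deriv h f.continuous,
    intervalIntegral.integral_of_le hT.le, integral_Icc_eq_integral_Ioc]

/-- If a finite nonnegative Borel measure `m` on `[0,T]` satisfies
`∫ f' dm = f T - f 0` for every `C¹` function `f`, then `m` is the
restriction of Lebesgue measure to `[0,T]`. -/
theorem stmt0 (T : ℝ) (hT : 0 < T) (m : Measure ℝ) [IsFiniteMeasure m]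
    (hsupp : m (Set.Icc 0 T)ᶜ = 0)
    (h : ∀ f : ℝ → ℝ, ContDiff ℝ 1 f → ∫ t, deriv f t ∂m = f T - f 0) :
    m = volume.restrict (Set.Icc 0 T) :=
  stmt0_general T hT m h
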